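/- Both sides of the symmetric bibasic transformation equal the power series ∑_{j=0}^∞ (b;q)_j (a;p)_j / ((q;q)_j (p;p)_j) · x^j. Precisely, for |a|,|b|,|p|,|q|,|x| < 1: ((a;p)_∞/(p;p)_∞) ∑_{k=0}^∞ (p/a;p)_k (x b p^k; q)_∞ a^k / ((p;p)_k (x p^k; q)_∞) = ∑_{j=0}^∞ (b;q)_j (a;p)_j x^j / ((q;q)_j (p;p)_j). -/

import Mathlib

/-- The q-Pochhammer symbol `(a;q)_n = ∏_{j=0}^{n-1} (1 - a q^j)`. -/
noncomputable def qPoch (a q : ℂ) (n : ℕ) : ℂ := ∏ j ∈ Finset.range n, (1 - a * q ^ j)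

/-- The infinite q-Pochhammer symbol `(a;q)_∞ = ∏_{j=0}^{∞} (1 - a q^j)`. -/
noncomputable def qPochInf (a q : ℂ) : ℂ := ∏' j : ℕ, (1 - a * q ^ j)

/-!
Expand each quotient `(x b p^k; q)_∞ / (x p^k; q)_∞` by the q-binomial theorem
`∑ₙ (c;q)_n / (q;q)_n zⁿ = (c z; q)_∞ / (z; q)_∞`, exchange the two sums (the double series
is dominated by `M ‖a‖^k · N ‖x‖^j`, since both q-binomial coefficient sequences converge),
and sum over `k` by the q-binomial theorem again, now with `c = p/a`, `z = a p^j`. This gives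
`(p^{j+1}; p)_∞ / (a p^j; p)_∞`, which the prefactor `(a;p)_∞/(p;p)_∞` turns into
`(a;p)_j/(p;p)_j`.

The q-binomial theorem follows from the functional equation `(1 - z) F(z) = (1 - c z) F(q z)`
of its series `F`: iterating it gives `(z;q)_N F(z) = (cz;q)_N F(z q^N)`, and
`F(z q^N) → F(0) = 1`.
-/

open Filter Topology

lemma summable_mul_pow_of_norm_le {R : Type*} [NormedRing R] [NormOneClass R] [CompleteSpace R]
    {f : ℕ → R} {M : ℝ} (hf : ∀ n, ‖f n‖ ≤ M) {w : R} (hw : ‖w‖ < 1) :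
    Summable fun n => f n * w ^ n := by
  refine .of_norm_bounded ((summable_geometric_of_lt_one (norm_nonneg w) hw).mul_left M)
    fun n => ?_
  calc ‖f n * w ^ n‖ ≤ ‖f n‖ * ‖w‖ ^ n :=
        (norm_mul_le _ _).trans (by gcongr; exact norm_pow_le _ _)
    _ ≤ M * ‖w‖ ^ n := by gcongr; exact hf n

lemma summable_uncurry_mul_pow_mul_mul_pow {A B : ℕ → ℂ} {M N : ℝ}
    (hA : ∀ k, ‖A k‖ ≤ M) (hB : ∀ j, ‖B j‖ ≤ N) {a x p : ℂ}
    (ha : ‖a‖ < 1) (hx : ‖x‖ < 1) (hp : ‖p‖ ≤ 1) :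
    Summable (Function.uncurry fun k j : ℕ => A k * a ^ k * (B j * (x * p ^ k) ^ j)) := by
  have hM : 0 ≤ M := (norm_nonneg _).trans (hA 0)
  have hN : 0 ≤ N := (norm_nonneg _).trans (hB 0)
  refine .of_norm_bounded (g := fun m : ℕ × ℕ => M * ‖a‖ ^ m.1 * (N * ‖x‖ ^ m.2))
    (.mul_of_nonneg ((summable_geometric_of_lt_one (norm_nonneg a) ha).mul_left M)
      ((summable_geometric_of_lt_one (norm_nonneg x) hx).mul_left N)
      (fun k => by positivity) (fun j => by positivity)) ?_
  rintro ⟨k, j⟩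
  have hxp : ‖x‖ * ‖p‖ ^ k ≤ ‖x‖ :=
    mul_le_of_le_one_right (norm_nonneg x) (pow_le_one₀ (norm_nonneg p) hp)
  simp only [Function.uncurry_apply_pair, norm_mul, norm_pow]
  gcongr
  exacts [hA k, hB j]

lemma norm_mul_pow_le_norm {c q : ℂ} (hq : ‖q‖ ≤ 1) (j : ℕ) : ‖c * q ^ j‖ ≤ ‖c‖ := by
  rw [norm_mul, norm_pow]
  exact mul_le_of_le_one_right (norm_nonneg c) (pow_le_one₀ (norm_nonneg q) hq)

lemma one_sub_mul_pow_ne_zero {c q : ℂ} (hc : ‖c‖ < 1) (hq : ‖q‖ ≤ 1) (j : ℕ) :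
    1 - c * q ^ j ≠ 0 := by
  intro h
  have := (norm_mul_pow_le_norm (c := c) hq j).trans_lt hc
  rw [← sub_eq_zero.mp h, norm_one] at this
  exact lt_irrefl _ this

lemma summable_norm_mul_pow (c : ℂ) {q : ℂ} (hq : ‖q‖ < 1) :
    Summable fun j : ℕ => ‖c * q ^ j‖ := by
  simpa [norm_mul, norm_pow] using
    (summable_geometric_of_lt_one (norm_nonneg q) hq).mul_left ‖c‖

lemma qPoch_zero (c q : ℂ) : qPoch c q 0 = 1 := Finset.prod_range_zero _

lemma qPoch_succ (c q : ℂ) (n : ℕ) : qPoch c q (n + 1) = qPoch c q n * (1 - c * q ^ n) :=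
  Finset.prod_range_succ _ _

lemma qPoch_ne_zero {c q : ℂ} (hc : ‖c‖ < 1) (hq : ‖q‖ ≤ 1) (n : ℕ) : qPoch c q n ≠ 0 :=
  Finset.prod_ne_zero_iff.mpr fun j _ => one_sub_mul_pow_ne_zero hc hq j

lemma multipliable_one_sub_mul_pow (c : ℂ) {q : ℂ} (hq : ‖q‖ < 1) :
    Multipliable fun j : ℕ => 1 - c * q ^ j := by
  simp_rw [sub_eq_add_neg]
  exact multipliable_one_add_of_summable (by simpa using summable_norm_mul_pow c hq)

lemma tendsto_qPoch (c : ℂ) {q : ℂ} (hq : ‖q‖ < 1) :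
    Tendsto (qPoch c q) atTop (𝓝 (qPochInf c q)) :=
  (multipliable_one_sub_mul_pow c hq).hasProd.tendsto_prod_nat

lemma qPochInf_ne_zero {c q : ℂ} (hc : ‖c‖ < 1) (hq : ‖q‖ < 1) : qPochInf c q ≠ 0 := by
  simp_rw [qPochInf, sub_eq_add_neg]
  exact tprod_one_add_ne_zero_of_summable
    (fun j => by simpa [← sub_eq_add_neg] using one_sub_mul_pow_ne_zero hc hq.le j)
    (by simpa using summable_norm_mul_pow c hq)

lemma qPochInf_eq_qPoch_mul (c : ℂ) {q : ℂ} (hq : ‖q‖ < 1) (n : ℕ) :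
    qPochInf c q = qPoch c q n * qPochInf (c * q ^ n) q := by
  have hshift : ∀ i, 1 - c * q ^ (i + n) = 1 - c * q ^ n * q ^ i := fun i => by ring
  have hm : Multipliable fun i : ℕ => 1 - c * q ^ (i + n) := by
    simpa only [hshift] using multipliable_one_sub_mul_pow (c * q ^ n) hq
  rw [qPochInf, ← hm.prod_mul_tprod_nat_mul' (f := fun i => 1 - c * q ^ i), qPoch, qPochInf]
  simp_rw [hshift]

lemma qPochInf_div_mul_div_eq_qPoch_div {a p : ℂ} (ha : ‖a‖ < 1) (hp : ‖p‖ < 1) (n : ℕ) :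
    qPochInf a p / qPochInf p p * (qPochInf (p * p ^ n) p / qPochInf (a * p ^ n) p)
      = qPoch a p n / qPoch p p n := by
  have h₁ := qPochInf_ne_zero ((norm_mul_pow_le_norm hp.le n).trans_lt ha) hp
  have h₂ := qPochInf_ne_zero ((norm_mul_pow_le_norm hp.le n).trans_lt hp) hp
  have h₃ := qPoch_ne_zero hp hp.le n
  rw [qPochInf_eq_qPoch_mul a hp n, qPochInf_eq_qPoch_mul p hp n]
  generalize qPochInf (p * p ^ n) p = P at h₂ ⊢
  field_simp

lemma exists_norm_qPoch_div_qPoch_le (c : ℂ) {q : ℂ} (hq : ‖q‖ < 1) :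
    ∃ M, ∀ n, ‖qPoch c q n / qPoch q q n‖ ≤ M := by
  have h := (tendsto_qPoch c hq).div (tendsto_qPoch q hq) (qPochInf_ne_zero hq hq)
  obtain ⟨M, hM⟩ := isBounded_iff_forall_norm_le.mp (Metric.isBounded_range_of_tendsto _ h)
  exact ⟨M, fun n => hM _ ⟨n, rfl⟩⟩

noncomputable def qBinomialSeries (c q w : ℂ) : ℂ :=
  ∑' n : ℕ, qPoch c q n / qPoch q q n * w ^ n

lemma summable_qBinomialSeries (c : ℂ) {q w : ℂ} (hq : ‖q‖ < 1) (hw : ‖w‖ < 1) :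
    Summable fun n : ℕ => qPoch c q n / qPoch q q n * w ^ n :=
  let ⟨_, hM⟩ := exists_norm_qPoch_div_qPoch_le c hq
  summable_mul_pow_of_norm_le hM hw

lemma qPoch_div_qPoch_succ_mul (c : ℂ) {q : ℂ} (hq : ‖q‖ < 1) (n : ℕ) :
    qPoch c q (n + 1) / qPoch q q (n + 1) * (1 - q ^ (n + 1))
      = qPoch c q n / qPoch q q n * (1 - c * q ^ n) := by
  have h₁ := qPoch_ne_zero hq hq.le n
  have h₂ := one_sub_mul_pow_ne_zero hq hq.le n
  rw [qPoch_succ, qPoch_succ, pow_succ']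
  generalize 1 - q * q ^ n = D at h₂ ⊢
  field_simp

lemma qBinomialSeries_functional_eq (c : ℂ) {q w : ℂ} (hq : ‖q‖ < 1) (hw : ‖w‖ < 1) :
    (1 - w) * qBinomialSeries c q w = (1 - c * w) * qBinomialSeries c q (q * w) := by
  set C : ℕ → ℂ := fun n => qPoch c q n / qPoch q q n
  -- With `F = qBinomialSeries c q`: the coefficients `C n * (1 - q ^ n)` of `F w - F (q w)`
  -- have constant term zero, and shifted by one they are those of `F w - c F (q w)`.
  have hs := summable_qBinomialSeries c hq hw
  have hs' := summable_qBinomialSeries c hq (w := q * w)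
    ((norm_mul_le _ _).trans_lt (mul_lt_one_of_nonneg_of_lt_one_left (norm_nonneg q) hq hw.le))
  have hsub : qBinomialSeries c q w - qBinomialSeries c q (q * w)
      = ∑' n, C n * (1 - q ^ n) * w ^ n := by
    rw [qBinomialSeries, qBinomialSeries, ← hs.tsum_sub hs']
    exact tsum_congr fun n => by ring
  have hsub' : qBinomialSeries c q w - c * qBinomialSeries c q (q * w)
      = ∑' n, C (n + 1) * (1 - q ^ (n + 1)) * w ^ n := by
    rw [qBinomialSeries, qBinomialSeries, ← tsum_mul_left, ← hs.tsum_sub (hs'.mul_left c)]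
    exact tsum_congr fun n => by simp only [C, qPoch_div_qPoch_succ_mul c hq n]; ring
  have hshift : ∑' n, C n * (1 - q ^ n) * w ^ n
      = w * ∑' n, C (n + 1) * (1 - q ^ (n + 1)) * w ^ n := by
    rw [((hs.sub hs').congr fun n => by ring).tsum_eq_zero_add, ← tsum_mul_left]
    simp only [pow_zero, sub_self, mul_zero, zero_mul, zero_add]
    exact tsum_congr fun n => by ring
  linear_combination hsub - w * hsub' + hshift

lemma qPoch_mul_qBinomialSeries (c : ℂ) {q z : ℂ} (hq : ‖q‖ < 1) (hz : ‖z‖ < 1) (N : ℕ) :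
    qPoch z q N * qBinomialSeries c q z
      = qPoch (c * z) q N * qBinomialSeries c q (z * q ^ N) := by
  induction N with
  | zero => simp [qPoch_zero]
  | succ N ih =>
    have hfe := qBinomialSeries_functional_eq c hq ((norm_mul_pow_le_norm hq.le N).trans_lt hz)
    rw [show q * (z * q ^ N) = z * q ^ (N + 1) by ring] at hfe
    rw [qPoch_succ, qPoch_succ]
    linear_combination (1 - z * q ^ N) * ih + qPoch (c * z) q N * hfe

lemma tendsto_qBinomialSeries_mul_pow (c : ℂ) {q z : ℂ} (hq : ‖q‖ < 1) (hz : ‖z‖ < 1) :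
    Tendsto (fun N : ℕ => qBinomialSeries c q (z * q ^ N)) atTop (𝓝 1) := by
  obtain ⟨M, hM⟩ := exists_norm_qPoch_div_qPoch_le c hq
  have hlim := tendsto_tsum_of_dominated_convergence (𝓕 := atTop)
    (f := fun N n => qPoch c q n / qPoch q q n * (z * q ^ N) ^ n)
    (g := fun n => qPoch c q n / qPoch q q n * 0 ^ n)
    ((summable_geometric_of_lt_one (norm_nonneg z) hz).mul_left M)
    (fun n => by
      simpa using ((tendsto_pow_atTop_nhds_zero_of_norm_lt_one hq).const_mul z).pow n
        |>.const_mul (qPoch c q n / qPoch q q n))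
    (.of_forall fun N n => by
      rw [norm_mul, norm_pow]
      exact mul_le_mul (hM n)
        (pow_le_pow_left₀ (norm_nonneg _) (norm_mul_pow_le_norm hq.le N) n)
        (by positivity) ((norm_nonneg _).trans (hM n)))
  rwa [tsum_eq_single 0 fun n hn => by simp [hn], pow_zero, qPoch_zero, qPoch_zero, div_one,
    mul_one] at hlim

theorem qBinomialSeries_eq (c : ℂ) {q z : ℂ} (hq : ‖q‖ < 1) (hz : ‖z‖ < 1) :
    qBinomialSeries c q z = qPochInf (c * z) q / qPochInf z q := by
  rw [eq_div_iff (qPochInf_ne_zero hz hq), mul_comm]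
  have h₁ := (tendsto_qPoch z hq).mul_const (qBinomialSeries c q z)
  have h₂ := (tendsto_qPoch (c * z) hq).mul (tendsto_qBinomialSeries_mul_pow c hq hz)
  rw [mul_one] at h₂
  exact tendsto_nhds_unique (h₁.congr (qPoch_mul_qBinomialSeries c hq hz)) h₂

theorem stmt3_general (a b p q x : ℂ) (ha0 : a ≠ 0)
    (ha : ‖a‖ < 1) (hp : ‖p‖ < 1) (hq : ‖q‖ < 1) (hx : ‖x‖ < 1) :
    (qPochInf a p / qPochInf p p) *
        ∑' k : ℕ, qPoch (p / a) p k * qPochInf (x * b * p ^ k) q * a ^ k /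
          (qPoch p p k * qPochInf (x * p ^ k) q)
      = ∑' j : ℕ, qPoch b q j * qPoch a p j * x ^ j / (qPoch q q j * qPoch p p j) := by
  set A : ℕ → ℂ := fun k => qPoch (p / a) p k / qPoch p p k
  set B : ℕ → ℂ := fun j => qPoch b q j / qPoch q q j
  obtain ⟨M, hA⟩ := exists_norm_qPoch_div_qPoch_le (p / a) hp
  obtain ⟨N, hB⟩ := exists_norm_qPoch_div_qPoch_le b hq
  have hrow : ∀ k : ℕ, qPoch (p / a) p k * qPochInf (x * b * p ^ k) q * a ^ k /
      (qPoch p p k * qPochInf (x * p ^ k) q) = ∑' j, A k * a ^ k * (B j * (x * p ^ k) ^ j) := by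
    intro k
    rw [tsum_mul_left, ← qBinomialSeries,
      qBinomialSeries_eq b hq ((norm_mul_pow_le_norm hp.le k).trans_lt hx),
      show b * (x * p ^ k) = x * b * p ^ k by ring]
    ring
  have hcol : ∀ j : ℕ, ∑' k, A k * a ^ k * (B j * (x * p ^ k) ^ j)
      = B j * x ^ j * (qPochInf (p * p ^ j) p / qPochInf (a * p ^ j) p) := by
    intro j
    rw [← show p / a * (a * p ^ j) = p * p ^ j by field_simp,
      ← qBinomialSeries_eq (p / a) hp ((norm_mul_pow_le_norm hp.le j).trans_lt ha),
      qBinomialSeries, ← tsum_mul_left]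
    exact tsum_congr fun k => by ring
  rw [tsum_congr hrow, ← (summable_uncurry_mul_pow_mul_mul_pow hA hB ha hx hp.le).tsum_comm,
    tsum_congr hcol, ← tsum_mul_left]
  exact tsum_congr fun j => by
    linear_combination B j * x ^ j * qPochInf_div_mul_div_eq_qPoch_div ha hp j

/-- Both sides of the symmetric bibasic transformation equal
`∑_{j≥0} (b;q)_j (a;p)_j x^j / ((q;q)_j (p;p)_j)`. -/
theorem stmt3 (a b p q x : ℂ) (ha0 : a ≠ 0)
    (ha : ‖a‖ < 1) (hb : ‖b‖ < 1) (hp : ‖p‖ < 1) (hq : ‖q‖ < 1) (hx : ‖x‖ < 1) :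
    (qPochInf a p / qPochInf p p) *
        ∑' k : ℕ, qPoch (p / a) p k * qPochInf (x * b * p ^ k) q * a ^ k /
          (qPoch p p k * qPochInf (x * p ^ k) q)
      = ∑' j : ℕ, qPoch b q j * qPoch a p j * x ^ j / (qPoch q q j * qPoch p p j) :=
  stmt3_general a b p q x ha0 ha hp hq hx
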